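/- For a block-diagonal density matrix ρ = Σ_k w_k ρ_k, where the ρ_k are density matrices supported on mutually orthogonal subspaces of the form V_k^A ⊗ H_B with w_k ≥ 0, Σ w_k = 1, the entanglement negativity across the A|B cut is additive: N(ρ) = Σ_k w_k N(ρ_k). -/

import Mathlib

/-!
The partial transpose of a block-diagonal state is again block-diagonal: `M = Σ_k w_k T_k`
with `T_k = ρ_k^{T_A}` supported on the `k`-th block, so the `T_k` have pairwise orthogonal
row spaces and pairwise orthogonal column spaces. Then the cross terms of `MᴴM` vanish, and
so do the products of the square roots of the diagonal terms, so
`√(MᴴM) = Σ_k w_k √(T_kᴴT_k)`: the trace norm is additive over the blocks.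
Since `Σ_k w_k = 1`, the constant `-1/2` in the negativity distributes over the sum.
-/

open Matrix
open scoped ComplexOrder

/-- The trace norm `‖M‖₁ = Tr √(MᴴM)` of a square complex matrix. -/
noncomputable def traceNorm {m : Type*} [Fintype m] [DecidableEq m]
    (M : Matrix m m ℂ) : ℝ :=
  (((Matrix.posSemidef_conjTranspose_mul_self M).1.eigenvectorUnitary : Matrix m m ℂ) *
      diagonal (((↑) : ℝ → ℂ) ∘ (√·) ∘ (Matrix.posSemidef_conjTranspose_mul_self M).1.eigenvalues) *
      (star (Matrix.posSemidef_conjTranspose_mul_self M).1.eigenvectorUnitary : Matrix m m ℂ)).trace.re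

/-- The partial transpose on the `A` factor of an operator on `H_A ⊗ H_B`,
taken with respect to the chosen basis of `H_A`. -/
def ptransA {a b : Type*} (ρ : Matrix (a × b) (a × b) ℂ) :
    Matrix (a × b) (a × b) ℂ :=
  fun p q => ρ (q.1, p.2) (p.1, q.2)

/-- The entanglement negativity `N(σ) = (‖σ^{T_A}‖₁ − 1)/2` across the `A|B` cut. -/
noncomputable def negativity {a b : Type*} [Fintype a] [Fintype b]
    [DecidableEq a] [DecidableEq b] (σ : Matrix (a × b) (a × b) ℂ) : ℝ :=
  (traceNorm (ptransA σ) - 1) / 2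

open scoped MatrixOrder

lemma Finset.sum_mul_sum_eq_sum_of_mul_eq_zero {ι R : Type*} [NonUnitalNonAssocSemiring R]
    (s : Finset ι) (f g : ι → R) (h : ∀ i ∈ s, ∀ j ∈ s, i ≠ j → f i * g j = 0) :
    (∑ i ∈ s, f i) * ∑ j ∈ s, g j = ∑ i ∈ s, f i * g i := by
  rw [Finset.sum_mul_sum]
  refine Finset.sum_congr rfl fun i hi => Finset.sum_eq_single i (fun j hj hji => ?_) ?_
  · exact h i hi j hj hji.symm
  · exact fun hi' => absurd hi hi'

namespace Matrix

variable {n K R : Type*}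

def IsSupportedOnBlock (label : n → K) (k : K) (M : Matrix n n R) [Zero R] : Prop :=
  ∀ i j, (label i ≠ k ∨ label j ≠ k) → M i j = 0

lemma IsSupportedOnBlock.conjTranspose [AddMonoid R] [StarAddMonoid R] {label : n → K} {k : K}
    {M : Matrix n n R} (hM : IsSupportedOnBlock label k M) :
    IsSupportedOnBlock label k Mᴴ := fun i j h => by
  rw [conjTranspose_apply, hM j i h.symm, star_zero]

lemma IsSupportedOnBlock.mul_eq_zero [Fintype n] [NonUnitalNonAssocSemiring R]
    {label : n → K} {j k : K} {M N : Matrix n n R} (hM : IsSupportedOnBlock label j M)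
    (hN : IsSupportedOnBlock label k N) (hjk : j ≠ k) : M * N = 0 := by
  ext p q
  refine Finset.sum_eq_zero fun r _ => ?_
  dsimp only
  by_cases hr : label r = j
  · rw [hN r q (Or.inl (hr ▸ hjk)), mul_zero]
  · rw [hM p r (Or.inr hr), zero_mul]

end Matrix

lemma CFC.sqrt_mul_sqrt_eq_zero_of_mul_eq_zero {n 𝕜 : Type*} [RCLike 𝕜] [Fintype n]
    [DecidableEq n] {A B : Matrix n n 𝕜} (hA : 0 ≤ A) (hB : 0 ≤ B) (hAB : A * B = 0) :
    CFC.sqrt A * CFC.sqrt B = 0 := by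
  have hA_herm := (nonneg_iff_posSemidef.mp hA).1
  have hsA := (nonneg_iff_posSemidef.mp (CFC.sqrt_nonneg A)).1
  have hsB := (nonneg_iff_posSemidef.mp (CFC.sqrt_nonneg B)).1
  -- `Xᴴ * X = 0` forces `X = 0`; apply this to `X = √B * A`, then to `X = √A * √B`.
  have hsBA : CFC.sqrt B * A = 0 := by
    rw [← conjTranspose_mul_self_eq_zero, conjTranspose_mul, hsB, hA_herm, mul_assoc,
      ← mul_assoc (CFC.sqrt B), CFC.sqrt_mul_sqrt_self B hB, ← mul_assoc, hAB, zero_mul]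
  have hAsB : A * CFC.sqrt B = 0 := by
    rw [← hA_herm, ← hsB, ← conjTranspose_mul, hsBA, conjTranspose_zero]
  rw [← conjTranspose_mul_self_eq_zero, conjTranspose_mul, hsA, hsB, mul_assoc,
    ← mul_assoc (CFC.sqrt A), CFC.sqrt_mul_sqrt_self A hA, hAsB, mul_zero]

lemma traceNorm_eq_re_trace_sqrt {n : Type*} [Fintype n] [DecidableEq n] (M : Matrix n n ℂ) :
    traceNorm M = (CFC.sqrt (Mᴴ * M)).trace.re := by
  have hM := posSemidef_conjTranspose_mul_self M
  rw [CFC.sqrt_eq_cfc, cfc_nnreal_eq_real _ _ hM.nonneg, hM.1.cfc_eq, IsHermitian.cfc,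
    Unitary.conjStarAlgAut_apply, traceNorm]
  congr 6
  funext x
  simp only [Function.comp_apply, Real.coe_sqrt, Real.coe_toNNReal',
    max_eq_left (hM.eigenvalues_nonneg x)]

lemma traceNorm_sum_smul_of_orthogonal {n K : Type*} [Fintype n] [DecidableEq n]
    (s : Finset K) (c : K → ℝ) (hc : ∀ k ∈ s, 0 ≤ c k) (T : K → Matrix n n ℂ)
    (hcol : ∀ j ∈ s, ∀ k ∈ s, j ≠ k → (T j)ᴴ * T k = 0)
    (hrow : ∀ j ∈ s, ∀ k ∈ s, j ≠ k → T j * (T k)ᴴ = 0) :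
    traceNorm (∑ k ∈ s, (c k : ℂ) • T k) = ∑ k ∈ s, c k * traceNorm (T k) := by
  set A : K → Matrix n n ℂ := fun k => (T k)ᴴ * T k
  have hA : ∀ k, 0 ≤ A k := fun k => (posSemidef_conjTranspose_mul_self (T k)).nonneg
  have hAA : ∀ j ∈ s, ∀ k ∈ s, j ≠ k → A j * A k = 0 := fun j hj k hk hjk => by
    simp only [A, mul_assoc, ← mul_assoc (T j), hrow j hj k hk hjk, zero_mul, mul_zero]
  set M := ∑ k ∈ s, (c k : ℂ) • T k
  set S := ∑ k ∈ s, (c k : ℂ) • CFC.sqrt (A k)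
  have hS : 0 ≤ S := Finset.sum_nonneg fun k hk =>
    smul_nonneg (by exact_mod_cast hc k hk) (CFC.sqrt_nonneg _)
  have hSS : S * S = Mᴴ * M := by
    rw [conjTranspose_sum, Finset.sum_mul_sum_eq_sum_of_mul_eq_zero,
      Finset.sum_mul_sum_eq_sum_of_mul_eq_zero]
    · refine Finset.sum_congr rfl fun k _ => ?_
      simp only [conjTranspose_smul, Complex.star_def, Complex.conj_ofReal, smul_mul_smul_comm,
        CFC.sqrt_mul_sqrt_self (A k) (hA k), A]
    · intro j hj k hk hjk
      simp only [conjTranspose_smul, smul_mul_smul_comm, hcol j hj k hk hjk, smul_zero]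
    · intro j hj k hk hjk
      simp only [smul_mul_smul_comm,
        CFC.sqrt_mul_sqrt_eq_zero_of_mul_eq_zero (hA j) (hA k) (hAA j hj k hk hjk), smul_zero]
  have hsqrt : CFC.sqrt (Mᴴ * M) = S :=
    (CFC.sqrt_eq_iff _ S (posSemidef_conjTranspose_mul_self _).nonneg hS).mpr hSS
  rw [traceNorm_eq_re_trace_sqrt, hsqrt, trace_sum, Complex.re_sum]
  refine Finset.sum_congr rfl fun k _ => ?_
  rw [trace_smul, smul_eq_mul, Complex.re_ofReal_mul, traceNorm_eq_re_trace_sqrt]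

lemma ptransA_sum_smul {a b K : Type*} (s : Finset K) (c : K → ℂ)
    (ρ : K → Matrix (a × b) (a × b) ℂ) :
    ptransA (∑ k ∈ s, c k • ρ k) = ∑ k ∈ s, c k • ptransA (ρ k) := by
  ext p q
  simp only [ptransA, Matrix.sum_apply, Matrix.smul_apply]

lemma Matrix.IsSupportedOnBlock.ptransA {a b K : Type*} {label : a → K} {k : K}
    {ρ : Matrix (a × b) (a × b) ℂ} (hρ : IsSupportedOnBlock (label ∘ Prod.fst) k ρ) :
    IsSupportedOnBlock (label ∘ Prod.fst) k (ptransA ρ) := fun p q h =>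
  hρ (q.1, p.2) (p.1, q.2) h.symm

theorem stmt15_general {a b K : Type*} [Fintype a] [Fintype b] [Fintype K]
    [DecidableEq a] [DecidableEq b]
    (label : a → K)
    (w : K → ℝ) (hw0 : ∀ k, 0 ≤ w k) (hw1 : ∑ k, w k = 1)
    (ρk : K → Matrix (a × b) (a × b) ℂ)
    (hsupp : ∀ (k : K) (p q : a × b),
      (label p.1 ≠ k ∨ label q.1 ≠ k) → ρk k p q = 0) :
    negativity (∑ k, ((w k : ℝ) : ℂ) • ρk k) = ∑ k, w k * negativity (ρk k) := by
  have hT : ∀ k, IsSupportedOnBlock (label ∘ Prod.fst) k (ptransA (ρk k)) :=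
    fun k => IsSupportedOnBlock.ptransA (hsupp k)
  have hnorm : traceNorm (ptransA (∑ k, (w k : ℂ) • ρk k)) =
      ∑ k, w k * traceNorm (ptransA (ρk k)) := by
    rw [ptransA_sum_smul]
    exact traceNorm_sum_smul_of_orthogonal _ w (fun k _ => hw0 k) _
      (fun j _ k _ hjk => (hT j).conjTranspose.mul_eq_zero (hT k) hjk)
      (fun j _ k _ hjk => (hT j).mul_eq_zero (hT k).conjTranspose hjk)
  calc negativity (∑ k, (w k : ℂ) • ρk k)
      = (∑ k, w k * traceNorm (ptransA (ρk k)) - ∑ k, w k) / 2 := by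
        rw [negativity, hnorm, hw1]
    _ = ∑ k, w k * negativity (ρk k) := by
        simp only [negativity, Finset.sum_div, ← Finset.sum_sub_distrib]
        exact Finset.sum_congr rfl fun k _ => by ring

/-- For a block-diagonal density matrix `ρ = Σ_k w_k ρ_k`, where each `ρ_k` is a
density matrix supported on `V_k^A ⊗ H_B` for an orthogonal decomposition
`H_A = ⊕_k V_k^A` (blocks distinguished by the label of the `A` factor), with
`w_k ≥ 0`, `Σ w_k = 1`, the entanglement negativity across the `A|B` cut is
additive: `N(ρ) = Σ_k w_k N(ρ_k)`. -/
theorem stmt15 {a b K : Type*} [Fintype a] [Fintype b] [Fintype K]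
    [DecidableEq a] [DecidableEq b] [DecidableEq K]
    (label : a → K)
    (w : K → ℝ) (hw0 : ∀ k, 0 ≤ w k) (hw1 : ∑ k, w k = 1)
    (ρk : K → Matrix (a × b) (a × b) ℂ)
    (hpsd : ∀ k, (ρk k).PosSemidef) (htr : ∀ k, (ρk k).trace = 1)
    (hsupp : ∀ (k : K) (p q : a × b),
      (label p.1 ≠ k ∨ label q.1 ≠ k) → ρk k p q = 0) :
    negativity (∑ k, ((w k : ℝ) : ℂ) • ρk k) = ∑ k, w k * negativity (ρk k) :=
  stmt15_general label w hw0 hw1 ρk hsupp
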